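/- arXiv:1702.08870 — 2 statements merged into one kernel-verified Lean document; each statement's English description precedes it below -/
import Mathlib

section
/- Let H be a subspace of a real inner product space V and suppose V = H ⊕ H^⊥ (e.g., V smooth vector fields with L² inner product, H^⊥ characterized as those v orthogonal to all of H). If X ∈ V decomposes as X = X_H + X_⊥ with X_H ∈ H, X_⊥ ∈ H^⊥, this decomposition is unique; applied to Lemma: every tangent vector u∘φ ∈ T_φ Diff(M) decomposes uniquely as a vertical part (u_v with div(ρ u_v) = 0, ρ = Jac(φ^{-1})) plus a horizontal part of the form A^{-1}(ρ ∇p) ∘ φ, given that every smooth vector field u can be written u = A^{-1}(ρ∇p) + A^{-1}(ρ w̃) with w̃ divergence-free via the Helmholtz decomposition of (1/ρ)Au. -/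
/-!
The horizontal potential `p` solves `L_ρ p = -div (ρ u)`, whose right-hand side has zero mean by
the divergence theorem. Integration by parts turns the `G`-pairing of `A (A⁻¹ (ρ ∇p))` with any
field `v` into `-∫ p div (ρ v)`. This gives orthogonality at once; for two decompositions with
horizontal parts `h₁, h₂` it shows that `h₁` and `h₂` have the same `G`-pairings with `h₁` as
with `h₂`, so the `G`-norm of `h₁ - h₂` vanishes and strict positivity of `A` forces `h₁ = h₂`.
-/

open MeasureTheory
open scoped RealInnerProductSpace

theorem dvg_smul_eq_of_add_eq {M E : Type*} [AddCommGroup E] [Module ℝ E]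
    {dvg : (M → E) →ₗ[ℝ] (M → ℝ)} {ρ : M → ℝ} {u h v : M → E}
    (huv : ∀ x, u x = h x + v x) (hv : ∀ x, dvg (fun y => ρ y • v y) x = 0) :
    dvg (fun y => ρ y • h y) = dvg (fun y => ρ y • u y) := by
  have hsplit : (fun y => ρ y • u y) = (fun y => ρ y • h y) + fun y => ρ y • v y := by
    funext y
    simp only [huv y, smul_add, Pi.add_apply]
  have hv0 : dvg (fun y => ρ y • v y) = 0 := funext hv
  rw [hsplit, map_add, hv0, add_zero]

section

variable {M E : Type*} [MeasurableSpace M] {μ : Measure M}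
  [NormedAddCommGroup E] [InnerProductSpace ℝ E]

theorem integral_inner_smul_grad_eq_neg_integral_mul_dvg
    {grad : (M → ℝ) → (M → E)} {dvg : (M → E) → (M → ℝ)}
    (hIBP : ∀ (f : M → ℝ) (z : M → E),
      ∫ x, f x * dvg z x ∂μ = -∫ x, ⟪z x, grad f x⟫ ∂μ)
    (ρ p : M → ℝ) (v : M → E) :
    ∫ x, ⟪ρ x • grad p x, v x⟫ ∂μ = -∫ x, p x * dvg (fun y => ρ y • v y) x ∂μ := by
  have hpoint : ∀ x, ⟪ρ x • grad p x, v x⟫ = ⟪ρ x • v x, grad p x⟫ := fun x => by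
    rw [real_inner_smul_left, real_inner_smul_left, real_inner_comm]
  simp only [hpoint, hIBP, neg_neg]

theorem eq_zero_of_integral_inner_self_eq_zero {A : (M → E) → (M → E)}
    (hApos : ∀ z : M → E, (∃ x, z x ≠ 0) → 0 < ∫ x, ⟪A z x, z x⟫ ∂μ) {z : M → E}
    (hz : ∫ x, ⟪A z x, z x⟫ ∂μ = 0) : z = 0 := by
  by_contra hne
  obtain ⟨x, hx⟩ := Function.ne_iff.mp hne
  exact (hApos z ⟨x, hx⟩).ne' hz

/-- Bochner integrals of non-integrable functions are `0`, so a pairing whose integral equals a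
`G`-norm is integrable unless `h = 0`, where it vanishes identically. -/
theorem integrable_inner_of_integral_eq {A : (M → E) →ₗ[ℝ] (M → E)}
    (hApos : ∀ z : M → E, (∃ x, z x ≠ 0) → 0 < ∫ x, ⟪A z x, z x⟫ ∂μ) {h z : M → E}
    (hhz : ∫ x, ⟪A h x, z x⟫ ∂μ = ∫ x, ⟪A h x, h x⟫ ∂μ) :
    Integrable (fun x => ⟪A h x, z x⟫) μ := by
  by_cases h0 : h = 0
  · simp [h0]
  · obtain ⟨x, hx⟩ := Function.ne_iff.mp h0
    exact Integrable.of_integral_ne_zero (hhz ▸ (hApos h ⟨x, hx⟩).ne')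

theorem eq_of_integral_inner_eq {A : (M → E) →ₗ[ℝ] (M → E)}
    (hApos : ∀ z : M → E, (∃ x, z x ≠ 0) → 0 < ∫ x, ⟪A z x, z x⟫ ∂μ) {h₁ h₂ : M → E}
    (h₁₂ : ∫ x, ⟪A h₁ x, h₂ x⟫ ∂μ = ∫ x, ⟪A h₁ x, h₁ x⟫ ∂μ)
    (h₂₁ : ∫ x, ⟪A h₂ x, h₁ x⟫ ∂μ = ∫ x, ⟪A h₂ x, h₂ x⟫ ∂μ) :
    h₁ = h₂ := by
  have hint : ∀ {h z : M → E}, ∫ x, ⟪A h x, z x⟫ ∂μ = ∫ x, ⟪A h x, h x⟫ ∂μ →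
      Integrable (fun x => ⟪A h x, z x⟫) μ := integrable_inner_of_integral_eq hApos
  have hexpand : (fun x => ⟪A (h₁ - h₂) x, (h₁ - h₂) x⟫) =
      ((fun x => ⟪A h₁ x, h₁ x⟫) - fun x => ⟪A h₁ x, h₂ x⟫) -
        ((fun x => ⟪A h₂ x, h₁ x⟫) - fun x => ⟪A h₂ x, h₂ x⟫) := by
    funext x
    simp only [map_sub, Pi.sub_apply, inner_sub_left, inner_sub_right]
    ring
  have hnorm : ∫ x, ⟪A (h₁ - h₂) x, (h₁ - h₂) x⟫ ∂μ = 0 := by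
    rw [hexpand, integral_sub' ((hint rfl).sub (hint h₁₂)) ((hint h₂₁).sub (hint rfl)),
      integral_sub' (hint rfl) (hint h₁₂), integral_sub' (hint h₂₁) (hint rfl), h₁₂, h₂₁]
    ring
  exact sub_eq_zero.mp (eq_zero_of_integral_inner_self_eq_zero hApos hnorm)

theorem exists_horizontal_add_vertical
    {grad : (M → ℝ) → (M → E)} {dvg : (M → E) →ₗ[ℝ] (M → ℝ)} {Ainv : (M → E) →ₗ[ℝ] (M → E)}
    {ρ : M → ℝ} (hdivthm : ∀ z : M → E, ∫ x, dvg z x ∂μ = 0)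
    (hLsurj : ∀ f : M → ℝ, (∫ x, f x ∂μ = 0) →
      ∃ p : M → ℝ, ∀ x, -(dvg (fun y => ρ y • Ainv (fun z => ρ z • grad p z) y) x) = f x)
    (u : M → E) :
    ∃ (p : M → ℝ) (v : M → E),
      (∀ x, u x = Ainv (fun z => ρ z • grad p z) x + v x)
      ∧ (∀ x, dvg (fun y => ρ y • v y) x = 0) := by
  have hmean : ∫ x, -dvg (fun y => ρ y • u y) x ∂μ = 0 := by
    rw [integral_neg, hdivthm, neg_zero]
  obtain ⟨p, hp⟩ := hLsurj _ hmean
  refine ⟨p, u - Ainv (fun z => ρ z • grad p z), fun x => by simp, fun x => ?_⟩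
  have hsplit : (fun y => ρ y • (u - Ainv (fun z => ρ z • grad p z)) y) =
      (fun y => ρ y • u y) - fun y => ρ y • Ainv (fun z => ρ z • grad p z) y := by
    funext y
    simp only [Pi.sub_apply, smul_sub]
  rw [hsplit, map_sub, Pi.sub_apply, neg_injective (hp x), sub_self]

end

theorem vertical_horizontal_decomposition_general
    {M E : Type*} [MeasurableSpace M] (μ : Measure M)
    [NormedAddCommGroup E] [InnerProductSpace ℝ E]
    (grad : (M → ℝ) → (M → E)) (dvg : (M → E) →ₗ[ℝ] (M → ℝ))
    (A : (M → E) →ₗ[ℝ] (M → E)) (Ainv : (M → E) →ₗ[ℝ] (M → E))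
    (hAinv : ∀ z : M → E, A (Ainv z) = z ∧ Ainv (A z) = z)
    (hdivthm : ∀ z : M → E, ∫ x, dvg z x ∂μ = 0)
    (hIBP : ∀ (f : M → ℝ) (z : M → E),
        ∫ x, f x * dvg z x ∂μ = -∫ x, ⟪z x, grad f x⟫ ∂μ)
    (hApos : ∀ z : M → E, (∃ x, z x ≠ 0) → 0 < ∫ x, ⟪A z x, z x⟫ ∂μ)
    (ρ : M → ℝ)
    (hLsurj : ∀ f : M → ℝ, (∫ x, f x ∂μ = 0) →
        ∃ p : M → ℝ, ∀ x, -(dvg (fun y => ρ y • Ainv (fun z => ρ z • grad p z) y) x) = f x) :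
    ∀ u : M → E,
      -- existence of the decomposition
      (∃ (p : M → ℝ) (v : M → E),
        (∀ x, u x = Ainv (fun z => ρ z • grad p z) x + v x)
        ∧ (∀ x, dvg (fun y => ρ y • v y) x = 0))
      -- uniqueness of the decomposition
      ∧ (∀ (p₁ p₂ : M → ℝ) (v₁ v₂ : M → E),
          (∀ x, u x = Ainv (fun z => ρ z • grad p₁ z) x + v₁ x) →
          (∀ x, dvg (fun y => ρ y • v₁ y) x = 0) →
          (∀ x, u x = Ainv (fun z => ρ z • grad p₂ z) x + v₂ x) →
          (∀ x, dvg (fun y => ρ y • v₂ y) x = 0) →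
          (∀ x, Ainv (fun z => ρ z • grad p₁ z) x = Ainv (fun z => ρ z • grad p₂ z) x)
          ∧ v₁ = v₂)
      -- G-orthogonality of the horizontal and vertical summands
      ∧ (∀ (p : M → ℝ) (v : M → E),
          (∀ x, dvg (fun y => ρ y • v y) x = 0) →
          ∫ x, ⟪A (Ainv (fun z => ρ z • grad p z)) x, v x⟫ ∂μ = 0) := by
  have hpair : ∀ (p : M → ℝ) (v : M → E), ∫ x, ⟪A (Ainv (fun z => ρ z • grad p z)) x, v x⟫ ∂μ
      = -∫ x, p x * dvg (fun y => ρ y • v y) x ∂μ := fun p v => by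
    rw [(hAinv _).1]
    exact integral_inner_smul_grad_eq_neg_integral_mul_dvg hIBP ρ p v
  intro u
  refine ⟨exists_horizontal_add_vertical hdivthm hLsurj u, ?_, fun p v hv => ?_⟩
  · intro p₁ p₂ v₁ v₂ hu₁ hv₁ hu₂ hv₂
    have hdvg₁ := dvg_smul_eq_of_add_eq hu₁ hv₁
    have hdvg₂ := dvg_smul_eq_of_add_eq hu₂ hv₂
    have hh : Ainv (fun z => ρ z • grad p₁ z) = Ainv (fun z => ρ z • grad p₂ z) :=
      eq_of_integral_inner_eq hApos (by rw [hpair, hpair, hdvg₁, hdvg₂])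
        (by rw [hpair, hpair, hdvg₁, hdvg₂])
    refine ⟨congrFun hh, funext fun x => ?_⟩
    exact add_left_cancel ((hu₁ x).symm.trans (hh ▸ hu₂ x))
  · simp [hpair, hv]

/-- Every smooth vector field `u` decomposes uniquely as a horizontal part
`A⁻¹(ρ∇p)` plus a vertical part `v` with `div(ρ v) = 0`, and the two summands are orthogonal
for the inner product `⟨u₁,u₂⟩_G = ∫ g(A u₁, u₂) μ`.  (Hypotheses: `A` an invertible linear
operator with inverse `Ainv`, self-adjoint and strictly positive for L²; the divergence
theorem and integration by parts hold; `ρ > 0`; and `L_ρ(p) = -div(ρ A⁻¹(ρ∇p))` is surjective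
onto zero-mean functions — the Helmholtz-type solvability used in the Lemma.) -/
theorem vertical_horizontal_decomposition
    {M E : Type*} [MeasurableSpace M] (μ : Measure M)
    [NormedAddCommGroup E] [InnerProductSpace ℝ E]
    (grad : (M → ℝ) → (M → E)) (dvg : (M → E) →ₗ[ℝ] (M → ℝ))
    (A : (M → E) →ₗ[ℝ] (M → E)) (Ainv : (M → E) →ₗ[ℝ] (M → E))
    (hAinv : ∀ z : M → E, A (Ainv z) = z ∧ Ainv (A z) = z)
    (hdivthm : ∀ z : M → E, ∫ x, dvg z x ∂μ = 0)
    (hIBP : ∀ (f : M → ℝ) (z : M → E),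
        ∫ x, f x * dvg z x ∂μ = -∫ x, ⟪z x, grad f x⟫ ∂μ)
    (hApos : ∀ z : M → E, (∃ x, z x ≠ 0) → 0 < ∫ x, ⟪A z x, z x⟫ ∂μ)
    (ρ : M → ℝ) (hρpos : ∀ x, 0 < ρ x)
    (hLsurj : ∀ f : M → ℝ, (∫ x, f x ∂μ = 0) →
        ∃ p : M → ℝ, ∀ x, -(dvg (fun y => ρ y • Ainv (fun z => ρ z • grad p z) y) x) = f x) :
    ∀ u : M → E,
      -- existence of the decomposition
      (∃ (p : M → ℝ) (v : M → E),
        (∀ x, u x = Ainv (fun z => ρ z • grad p z) x + v x)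
        ∧ (∀ x, dvg (fun y => ρ y • v y) x = 0))
      -- uniqueness of the decomposition
      ∧ (∀ (p₁ p₂ : M → ℝ) (v₁ v₂ : M → E),
          (∀ x, u x = Ainv (fun z => ρ z • grad p₁ z) x + v₁ x) →
          (∀ x, dvg (fun y => ρ y • v₁ y) x = 0) →
          (∀ x, u x = Ainv (fun z => ρ z • grad p₂ z) x + v₂ x) →
          (∀ x, dvg (fun y => ρ y • v₂ y) x = 0) →
          (∀ x, Ainv (fun z => ρ z • grad p₁ z) x = Ainv (fun z => ρ z • grad p₂ z) x)
          ∧ v₁ = v₂)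
      -- G-orthogonality of the horizontal and vertical summands
      ∧ (∀ (p : M → ℝ) (v : M → E),
          (∀ x, dvg (fun y => ρ y • v y) x = 0) →
          ∫ x, ⟪A (Ainv (fun z => ρ z • grad p z)) x, v x⟫ ∂μ = 0) :=
  vertical_horizontal_decomposition_general μ grad dvg A Ainv hAinv hdivthm hIBP hApos ρ hLsurj
end

section
/- Let M be a compact Riemannian manifold and define, for ρ ∈ C^∞(M) with ρ > 0 and p ∈ C^∞(M), the bilinear form Ḡ_ρ(ṙ, ṙ) = ∫_M (L_ρ^{-1} ṙ) ṙ μ_g on zero-mean functions ṙ, where L_ρ(p) = -div(ρ A^{-1}(ρ∇p)). Assuming L_ρ is a bijection from C^∞(M)/ℝ to zero-mean smooth functions, Ḡ_ρ is a positive-definite symmetric bilinear form, and it equals the G-length of the horizontal lift: Ḡ_ρ(ṙ, ṙ) = ∫_M g(A^{-1}(ρ∇p), ρ∇p) μ_g where p = L_ρ^{-1}(ṙ). -/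
open MeasureTheory
open scoped RealInnerProductSpace

/-!
Integrating by parts, `∫ f · L_ρ p = ∫ ⟪A⁻¹(ρ∇p), ρ∇f⟫`. Hence `Ḡ_ρ(ṙ, ṡ) = ∫ ⟪A⁻¹(ρ∇p), ρ∇q⟫`
for `L_ρ p = ṙ`, `L_ρ q = ṡ`, which is symmetric because `A⁻¹` is self-adjoint, and positive
because `A⁻¹` is positive and `ρ∇p` cannot vanish when `ṙ = L_ρ p` does not.
-/

section WeightedLaplacian

variable {M E : Type*} [NormedAddCommGroup E] [InnerProductSpace ℝ E]
  (grad : (M → ℝ) →ₗ[ℝ] (M → E)) (dvg : (M → E) →ₗ[ℝ] (M → ℝ)) (Ainv : (M → E) →ₗ[ℝ] (M → E))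

def weightedLaplacian (ρ : M → ℝ) (p : M → ℝ) : M → ℝ :=
  fun x => -(dvg (fun y => ρ y • Ainv (fun z => ρ z • grad p z) y) x)

theorem integral_mul_weightedLaplacian [MeasurableSpace M] {μ : Measure M}
    (hIBP : ∀ (f : M → ℝ) (z : M → E), ∫ x, f x * dvg z x ∂μ = -∫ x, ⟪z x, grad f x⟫ ∂μ)
    (ρ f p : M → ℝ) :
    ∫ x, f x * weightedLaplacian grad dvg Ainv ρ p x ∂μ
      = ∫ x, ⟪Ainv (fun z => ρ z • grad p z) x, ρ x • grad f x⟫ ∂μ := by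
  simp only [weightedLaplacian, mul_neg, integral_neg, hIBP, neg_neg, real_inner_smul_left,
    real_inner_smul_right]

theorem weightedLaplacian_eq_zero_of_smul_grad_eq_zero {ρ p : M → ℝ}
    (h : ∀ x, ρ x • grad p x = 0) (x : M) : weightedLaplacian grad dvg Ainv ρ p x = 0 := by
  have hflux : (fun z => ρ z • grad p z) = 0 := funext h
  simp only [weightedLaplacian, hflux, map_zero, Pi.zero_apply, smul_zero, neg_eq_zero]
  exact congr_fun (map_zero dvg) x

end WeightedLaplacian

theorem integral_inner_comm_of_selfAdjoint {M E : Type*} [MeasurableSpace M] {μ : Measure M}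
    [NormedAddCommGroup E] [InnerProductSpace ℝ E] {Ainv : (M → E) →ₗ[ℝ] (M → E)}
    (hAinv_selfadjoint : ∀ z₁ z₂ : M → E,
        ∫ x, ⟪Ainv z₁ x, z₂ x⟫ ∂μ = ∫ x, ⟪z₁ x, Ainv z₂ x⟫ ∂μ)
    (u v : M → E) :
    ∫ x, ⟪Ainv u x, v x⟫ ∂μ = ∫ x, ⟪Ainv v x, u x⟫ ∂μ := by
  simp only [hAinv_selfadjoint u v, real_inner_comm (u _)]

theorem descending_metric_positive_definite_symmetric_general
    {M E : Type*} [MeasurableSpace M] (μ : Measure M)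
    [NormedAddCommGroup E] [InnerProductSpace ℝ E]
    (grad : (M → ℝ) →ₗ[ℝ] (M → E)) (dvg : (M → E) →ₗ[ℝ] (M → ℝ))
    (Ainv : (M → E) →ₗ[ℝ] (M → E))
    (hIBP : ∀ (f : M → ℝ) (z : M → E),
        ∫ x, f x * dvg z x ∂μ = -∫ x, ⟪z x, grad f x⟫ ∂μ)
    (hAinv_selfadjoint : ∀ z₁ z₂ : M → E,
        ∫ x, ⟪Ainv z₁ x, z₂ x⟫ ∂μ = ∫ x, ⟪z₁ x, Ainv z₂ x⟫ ∂μ)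
    (hApos : ∀ z : M → E, (∃ x, z x ≠ 0) → 0 < ∫ x, ⟪Ainv z x, z x⟫ ∂μ)
    (ρ : M → ℝ) :
    ∀ (rdot sdot p q : M → ℝ),
      (∫ x, rdot x ∂μ = 0) → (∫ x, sdot x ∂μ = 0) →
      (∀ x, -(dvg (fun y => ρ y • Ainv (fun z => ρ z • grad p z) y) x) = rdot x) →
      (∀ x, -(dvg (fun y => ρ y • Ainv (fun z => ρ z • grad q z) y) x) = sdot x) →
      -- symmetry of Ḡ_ρ
      (∫ x, p x * sdot x ∂μ = ∫ x, q x * rdot x ∂μ)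
      -- positive definiteness of Ḡ_ρ
      ∧ ((∃ x, rdot x ≠ 0) → 0 < ∫ x, p x * rdot x ∂μ)
      -- Ḡ_ρ equals the G-length of the horizontal lift
      ∧ (∫ x, p x * rdot x ∂μ
          = ∫ x, ⟪Ainv (fun z => ρ z • grad p z) x, ρ x • grad p x⟫ ∂μ) := by
  intro rdot sdot p q _ _ hLp hLq
  have hrdot : rdot = weightedLaplacian grad dvg Ainv ρ p := funext fun x => (hLp x).symm
  have hsdot : sdot = weightedLaplacian grad dvg Ainv ρ q := funext fun x => (hLq x).symm
  subst hrdot hsdot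
  simp only [integral_mul_weightedLaplacian grad dvg Ainv hIBP]
  refine ⟨integral_inner_comm_of_selfAdjoint hAinv_selfadjoint _ _, ?_, trivial⟩
  rintro ⟨x₀, hx₀⟩
  refine hApos _ (not_forall.mp fun hflux => hx₀ ?_)
  exact weightedLaplacian_eq_zero_of_smul_grad_eq_zero grad dvg Ainv hflux x₀

/-- Define `Ḡ_ρ(rdot, rdot) = ∫ (L_ρ⁻¹ rdot) rdot μ_g` on zero-mean functions, where
`L_ρ(p) = -div(ρ A⁻¹(ρ∇p))` and `L_ρ` is a bijection from functions modulo constants onto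
zero-mean functions.  Then `Ḡ_ρ` is a positive-definite symmetric bilinear form and equals
the `G`-length of the horizontal lift: `Ḡ_ρ(rdot, rdot) = ∫ g(A⁻¹(ρ∇p), ρ∇p) μ_g` with
`p = L_ρ⁻¹(rdot)`. -/
theorem descending_metric_positive_definite_symmetric
    {M E : Type*} [MeasurableSpace M] (μ : Measure M)
    [NormedAddCommGroup E] [InnerProductSpace ℝ E]
    (grad : (M → ℝ) →ₗ[ℝ] (M → E)) (dvg : (M → E) →ₗ[ℝ] (M → ℝ))
    (Ainv : (M → E) →ₗ[ℝ] (M → E))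
    (hIBP : ∀ (f : M → ℝ) (z : M → E),
        ∫ x, f x * dvg z x ∂μ = -∫ x, ⟪z x, grad f x⟫ ∂μ)
    (hAinv_selfadjoint : ∀ z₁ z₂ : M → E,
        ∫ x, ⟪Ainv z₁ x, z₂ x⟫ ∂μ = ∫ x, ⟪z₁ x, Ainv z₂ x⟫ ∂μ)
    (hApos : ∀ z : M → E, (∃ x, z x ≠ 0) → 0 < ∫ x, ⟪Ainv z x, z x⟫ ∂μ)
    (ρ : M → ℝ) (hρpos : ∀ x, 0 < ρ x)
    -- L_ρ is a bijection onto zero-mean functions: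
    (hLsurj : ∀ f : M → ℝ, (∫ x, f x ∂μ = 0) →
        ∃ p : M → ℝ, ∀ x, -(dvg (fun y => ρ y • Ainv (fun z => ρ z • grad p z) y) x) = f x)
    (hLinj : ∀ p : M → ℝ,
        (∀ x, -(dvg (fun y => ρ y • Ainv (fun z => ρ z • grad p z) y) x) = 0) →
        ∃ c : ℝ, ∀ x, p x = c) :
    ∀ (rdot sdot p q : M → ℝ),
      (∫ x, rdot x ∂μ = 0) → (∫ x, sdot x ∂μ = 0) →
      (∀ x, -(dvg (fun y => ρ y • Ainv (fun z => ρ z • grad p z) y) x) = rdot x) →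
      (∀ x, -(dvg (fun y => ρ y • Ainv (fun z => ρ z • grad q z) y) x) = sdot x) →
      -- symmetry of Ḡ_ρ
      (∫ x, p x * sdot x ∂μ = ∫ x, q x * rdot x ∂μ)
      -- positive definiteness of Ḡ_ρ
      ∧ ((∃ x, rdot x ≠ 0) → 0 < ∫ x, p x * rdot x ∂μ)
      -- Ḡ_ρ equals the G-length of the horizontal lift
      ∧ (∫ x, p x * rdot x ∂μ
          = ∫ x, ⟪Ainv (fun z => ρ z • grad p z) x, ρ x • grad p x⟫ ∂μ) :=
  descending_metric_positive_definite_symmetric_general μ grad dvg Ainv hIBP hAinv_selfadjoint hApos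
    ρ
end
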